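/- For every set Λ of non-negative integers, the maximum density D̄₂(Λ) equals the infimum of densities of measurable sets Λ' of non-negative integers containing Λ. -/

import Mathlib

open Filter

/-- Counting function `n(x, Λ) = #(Λ ∩ [0, x])`. -/
noncomputable def countFn (Λ : Set ℕ) (x : ℝ) : ℕ :=
  {m ∈ Λ | (m : ℝ) ≤ x}.ncard

/-- Local density of `Λ` on the window `(x, (1+r)x]`. -/
noncomputable def windowRatio (Λ : Set ℕ) (r x : ℝ) : ℝ :=
  ((countFn Λ ((1 + r) * x) : ℝ) - countFn Λ x) / (r * x)

/-- `liminf` as `x → ∞` of the local density at window parameter `r`. -/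
noncomputable def lowerWindow (Λ : Set ℕ) (r : ℝ) : ℝ :=
  liminf (fun x : ℝ => windowRatio Λ r x) atTop

/-- `limsup` as `x → ∞` of the local density at window parameter `r`. -/
noncomputable def upperWindow (Λ : Set ℕ) (r : ℝ) : ℝ :=
  limsup (fun x : ℝ => windowRatio Λ r x) atTop

/-- `Λ` is measurable with density `d`. -/
def HasDensity (Λ : Set ℕ) (d : ℝ) : Prop :=
  Tendsto (fun x : ℝ => (countFn Λ x : ℝ) / x) atTop (nhds d)

/-!
If `Λ ⊆ Λ'` and `Λ'` has density `d`, the window ratios of `Λ` are dominated by those of `Λ'`,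
which tend to `d`; hence `D̄₂(Λ) ≤ d`. Conversely, for `D̄₂(Λ) < c ≤ 1` the greedy superset, which
adds `n` whenever fewer than `c n` of its elements lie below `n`, has density `c`. It never falls
more than `1` behind `c n`, and after the last time the greedy rule fires it only gains elements
of `Λ`. Chaining windows `(x, (1 + r) x]`, on each of which `Λ` has ratio below `c`, bounds that
gain on `[m, n]` by `c ((1 + r) n - m)`.
-/

open Topology
open scoped Classical

theorem tendsto_div_id_of_linear_bounds {f : ℝ → ℝ} {c : ℝ}
    (hlow : ∀ a < c, ∀ᶠ x in atTop, a * x ≤ f x) (hup : ∀ a > c, ∀ᶠ x in atTop, f x ≤ a * x) :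
    Tendsto (fun x => f x / x) atTop (𝓝 c) := by
  refine tendsto_order.2 ⟨fun a ha => ?_, fun a ha => ?_⟩
  · obtain ⟨b, hab, hbc⟩ := exists_between ha
    filter_upwards [hlow b hbc, eventually_gt_atTop 0] with x hx hx0
    exact hab.trans_le ((le_div_iff₀ hx0).2 hx)
  · obtain ⟨b, hcb, hba⟩ := exists_between ha
    filter_upwards [hup b hcb, eventually_gt_atTop 0] with x hx hx0
    exact ((div_le_iff₀ hx0).2 hx).trans_lt hba

theorem eventually_add_le_mul {a b : ℝ} (hab : b < a) (K : ℝ) :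
    ∀ᶠ x in atTop, b * x + K ≤ a * x := by
  filter_upwards [eventually_ge_atTop (K / (a - b))] with x hx
  rw [div_le_iff₀ (sub_pos.2 hab)] at hx
  linarith

theorem finite_setOf_mem_and_le (Λ : Set ℕ) (x : ℝ) : {m ∈ Λ | (m : ℝ) ≤ x}.Finite :=
  (Set.finite_Iic ⌊x⌋₊).subset fun _ hm => Nat.le_floor hm.2

theorem countFn_eq_count (Λ : Set ℕ) {x : ℝ} (hx : 0 ≤ x) :
    countFn Λ x = Nat.count (· ∈ Λ) (⌊x⌋₊ + 1) := by
  rw [countFn, Nat.count_eq_card_filter_range, ← Set.ncard_coe_finset]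
  congr 1
  ext m
  simp [Nat.le_floor_iff hx, and_comm]

theorem countFn_natCast (Λ : Set ℕ) (n : ℕ) : countFn Λ n = Nat.count (· ∈ Λ) (n + 1) := by
  simp [countFn_eq_count]

theorem countFn_mono (Λ : Set ℕ) : Monotone (countFn Λ) := fun _ y hxy =>
  Set.ncard_le_ncard (fun _ hm => ⟨hm.1, hm.2.trans hxy⟩) (finite_setOf_mem_and_le Λ y)

theorem countFn_add_countFn_diff {Λ Λ' : Set ℕ} (h : Λ ⊆ Λ') (x : ℝ) :
    countFn Λ x + countFn (Λ' \ Λ) x = countFn Λ' x := by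
  rw [countFn, countFn, countFn, ← Set.ncard_union_eq _ (finite_setOf_mem_and_le _ x)
    (finite_setOf_mem_and_le _ x)]
  · congr 1
    ext m
    by_cases hm : m ∈ Λ
    · simp [hm, h hm]
    · simp [hm]
  · exact Set.disjoint_left.2 fun _ hm hm' => hm'.1.2 hm.1

theorem countFn_univ {x : ℝ} (hx : 0 ≤ x) : countFn Set.univ x = ⌊x⌋₊ + 1 := by
  rw [countFn_eq_count _ hx]
  simp

theorem hasDensity_univ : HasDensity Set.univ 1 := by
  refine tendsto_div_id_of_linear_bounds (fun a ha => ?_) (fun a ha => ?_)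
  · filter_upwards [eventually_ge_atTop 0] with x hx
    rw [countFn_univ hx]
    push_cast
    nlinarith [Nat.lt_floor_add_one x]
  · filter_upwards [eventually_add_le_mul ha 1, eventually_ge_atTop 0] with x hx hx0
    rw [countFn_univ hx0]
    push_cast
    linarith [Nat.floor_le hx0]

section Window

variable {Λ Λ' : Set ℕ} {r x d : ℝ}

theorem windowRatio_le_windowRatio (h : Λ ⊆ Λ') (hr : 0 < r) (hx : 0 ≤ x) :
    windowRatio Λ r x ≤ windowRatio Λ' r x := by
  have hdiff : (countFn (Λ' \ Λ) x : ℝ) ≤ countFn (Λ' \ Λ) ((1 + r) * x) := by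
    exact_mod_cast countFn_mono _ (by nlinarith)
  refine div_le_div_of_nonneg_right ?_ (by positivity)
  rw [← countFn_add_countFn_diff h x, ← countFn_add_countFn_diff h ((1 + r) * x)]
  push_cast
  linarith

theorem windowRatio_nonneg (hr : 0 < r) (hx : 0 ≤ x) : 0 ≤ windowRatio Λ r x := by
  have hmono : (countFn Λ x : ℝ) ≤ countFn Λ ((1 + r) * x) := by
    exact_mod_cast countFn_mono Λ (by nlinarith)
  exact div_nonneg (sub_nonneg.2 hmono) (by positivity)

theorem tendsto_windowRatio (hr : 0 < r) (hd : HasDensity Λ d) :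
    Tendsto (windowRatio Λ r) atTop (𝓝 d) := by
  have hscaled : Tendsto (fun x => (countFn Λ ((1 + r) * x) : ℝ) / ((1 + r) * x)) atTop (𝓝 d) :=
    hd.comp (tendsto_id.const_mul_atTop (by linarith))
  have hlim := ((hscaled.mul_const (1 + r)).sub hd).div_const r
  rw [show (d * (1 + r) - d) / r = d by field_simp; ring] at hlim
  refine hlim.congr' ?_
  filter_upwards [eventually_gt_atTop 0] with x hx
  unfold windowRatio
  field_simp

theorem countFn_le_add_of_windowRatio_lt {c : ℝ} (hr : 0 < r) (hx : 0 < x)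
    (h : windowRatio Λ r x < c) : (countFn Λ ((1 + r) * x) : ℝ) ≤ countFn Λ x + c * r * x := by
  rw [windowRatio, div_lt_iff₀ (by positivity)] at h
  linarith

theorem isBoundedUnder_le_windowRatio (Λ : Set ℕ) (hr : 0 < r) :
    IsBoundedUnder (· ≤ ·) atTop (windowRatio Λ r) :=
  (tendsto_windowRatio hr hasDensity_univ).isBoundedUnder_le.mono_le <|
    eventually_ge_atTop 0 |>.mono fun _ hx => windowRatio_le_windowRatio (Set.subset_univ Λ) hr hx

theorem upperWindow_nonneg (Λ : Set ℕ) (hr : 0 < r) : 0 ≤ upperWindow Λ r :=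
  le_limsup_of_frequently_le
    ((eventually_ge_atTop 0).mono fun _ hx => windowRatio_nonneg hr hx).frequently
    (isBoundedUnder_le_windowRatio Λ hr)

theorem upperWindow_le_of_subset (h : Λ ⊆ Λ') (hr : 0 < r) (hd : HasDensity Λ' d) :
    upperWindow Λ r ≤ d := by
  have hlim := tendsto_windowRatio hr hd
  rw [← hlim.limsup_eq]
  refine limsup_le_limsup ?_ ?_ hlim.isBoundedUnder_le
  · exact (eventually_ge_atTop 0).mono fun _ hx => windowRatio_le_windowRatio h hr hx
  · exact isCoboundedUnder_le_of_eventually_le atTop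
      ((eventually_ge_atTop 0).mono fun _ hx => windowRatio_nonneg hr hx)

end Window

theorem Monotone.le_add_of_geometric_increment_le {f : ℝ → ℝ} (hf : Monotone f) {c r X : ℝ}
    (hc : 0 ≤ c) (hr : 0 < r) (hX : 0 < X) (h : ∀ x, X ≤ x → f ((1 + r) * x) ≤ f x + c * r * x)
    {m n : ℝ} (hm : X ≤ m) (hmn : m ≤ n) : f n ≤ f m + c * ((1 + r) * n - m) := by
  have hm0 : 0 < m := hX.trans_le hm
  obtain ⟨k, hk⟩ : ∃ k : ℕ, n / m < (1 + r) ^ k := pow_unbounded_of_one_lt _ (by linarith)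
  rw [div_lt_iff₀ hm0] at hk
  induction k generalizing n with
  | zero =>
    obtain rfl : n = m := le_antisymm (by simpa using hk.le) hmn
    nlinarith
  | succ k ih =>
    rcases le_or_gt n ((1 + r) * m) with hn | hn
    · calc f n ≤ f ((1 + r) * m) := hf hn
        _ ≤ f m + c * r * m := h m hm
        _ ≤ f m + c * ((1 + r) * n - m) := by
          nlinarith [mul_nonneg hc (mul_nonneg (by linarith : (0 : ℝ) ≤ 1 + r) (sub_nonneg.2 hmn))]
    · obtain ⟨y, rfl⟩ : ∃ y, (1 + r) * y = n := ⟨n / (1 + r), by field_simp⟩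
      have hmy : m ≤ y := le_of_mul_le_mul_left hn.le (by linarith)
      have hyk : y < (1 + r) ^ k * m := by
        refine lt_of_mul_lt_mul_left ?_ (by linarith : (0 : ℝ) ≤ 1 + r)
        linarith [show (1 + r) ^ (k + 1) * m = (1 + r) * ((1 + r) ^ k * m) by ring]
      have hy : f ((1 + r) * y) ≤ f y + c * r * y := h y (hm.trans hmy)
      have := ih hmy hyk
      nlinarith [mul_nonneg (mul_nonneg hc hr.le) (by nlinarith : (0 : ℝ) ≤ (1 + r) * y - y)]

noncomputable def greedyCount (Λ : Set ℕ) (c : ℝ) : ℕ → ℕ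
  | 0 => 0
  | n + 1 => greedyCount Λ c n + if n ∈ Λ ∨ (greedyCount Λ c n : ℝ) < c * n then 1 else 0

def greedySet (Λ : Set ℕ) (c : ℝ) : Set ℕ :=
  {n | n ∈ Λ ∨ (greedyCount Λ c n : ℝ) < c * n}

section Greedy

variable {Λ : Set ℕ} {c : ℝ}

theorem subset_greedySet : Λ ⊆ greedySet Λ c := fun _ => Or.inl

theorem count_greedySet (n : ℕ) : Nat.count (· ∈ greedySet Λ c) n = greedyCount Λ c n := by
  induction n with
  | zero => rfl
  | succ n ih =>
    rw [Nat.count_succ, ih, greedyCount]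
    congr

theorem mem_greedySet_iff {n : ℕ} :
    n ∈ greedySet Λ c ↔ n ∈ Λ ∨ (Nat.count (· ∈ greedySet Λ c) n : ℝ) < c * n := by
  rw [count_greedySet]; rfl

theorem sub_one_le_count_greedySet (hc : c ≤ 1) (n : ℕ) :
    c * n - 1 ≤ Nat.count (· ∈ greedySet Λ c) n := by
  induction n with
  | zero => simp
  | succ n ih =>
    rw [Nat.count_succ]
    by_cases hn : (Nat.count (· ∈ greedySet Λ c) n : ℝ) < c * n
    · rw [if_pos (mem_greedySet_iff.2 (Or.inr hn))]
      push_cast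
      linarith
    · push_cast
      split_ifs <;> linarith

/-- The excess of the greedy count over that of `Λ` changes only at the times `m` at which the
greedy rule fires, and right after such a time it is at most `c m + 1 - #(Λ ∩ [0, m))`. -/
theorem exists_count_greedySet_add_count_le (hc : 0 ≤ c) {a n : ℕ} (han : a ≤ n) :
    ∃ m, a ≤ m ∧ m ≤ n ∧ (Nat.count (· ∈ greedySet Λ c) n : ℝ) + Nat.count (· ∈ Λ) m ≤
      Nat.count (· ∈ Λ) n + c * m + (Nat.count (· ∈ greedySet Λ c) a + 1) := by
  induction n, han using Nat.le_induction with
  | base => exact ⟨a, le_rfl, le_rfl, by nlinarith⟩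
  | succ n han ih =>
    simp only [Nat.count_succ]
    by_cases hn : (Nat.count (· ∈ greedySet Λ c) n : ℝ) < c * n
    · refine ⟨n, han, n.le_succ, ?_⟩
      push_cast
      split_ifs <;> linarith
    · obtain ⟨m, ham, hmn, hm⟩ := ih
      have hiff : n ∈ greedySet Λ c ↔ n ∈ Λ := by rw [mem_greedySet_iff, or_iff_left hn]
      refine ⟨m, ham, hmn.trans n.le_succ, ?_⟩
      simp only [hiff]
      push_cast
      split_ifs <;> linarith

end Greedy

section GreedyDensity

variable {Λ : Set ℕ} {c r : ℝ}

theorem count_greedySet_le (hc : 0 ≤ c) (hr : 0 < r) {X : ℝ} (hX : 0 < X)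
    (h : ∀ x, X ≤ x → (countFn Λ ((1 + r) * x) : ℝ) ≤ countFn Λ x + c * r * x)
    {n : ℕ} (hn : ⌈X⌉₊ ≤ n) :
    (Nat.count (· ∈ greedySet Λ c) n : ℝ) ≤
      c * (1 + r) * n + (Nat.count (· ∈ greedySet Λ c) ⌈X⌉₊ + 2) := by
  obtain ⟨m, hm, hmn, hgreedy⟩ := exists_count_greedySet_add_count_le hc hn
  have hwindows : (countFn Λ n : ℝ) ≤ countFn Λ m + c * ((1 + r) * n - m) :=
    (Nat.mono_cast.comp (countFn_mono Λ)).le_add_of_geometric_increment_le hc hr hX h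
      ((Nat.le_ceil X).trans (by exact_mod_cast hm)) (by exact_mod_cast hmn)
  have hn' : (Nat.count (· ∈ Λ) n : ℝ) ≤ countFn Λ n := by
    rw [countFn_natCast]; exact_mod_cast Nat.count_monotone _ n.le_succ
  have hm' : (countFn Λ m : ℝ) ≤ Nat.count (· ∈ Λ) m + 1 := by
    rw [countFn_natCast, Nat.count_succ]; push_cast; split_ifs <;> linarith
  nlinarith

theorem exists_eventually_countFn_greedySet_le (hc : 0 ≤ c) (hr : 0 < r)
    (h : upperWindow Λ r < c) :
    ∃ K, ∀ᶠ x in atTop, (countFn (greedySet Λ c) x : ℝ) ≤ c * (1 + r) * x + K := by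
  obtain ⟨X, hX⟩ := eventually_atTop.1 <|
    eventually_lt_of_limsup_lt h (isBoundedUnder_le_windowRatio Λ hr)
  have hwindow (x : ℝ) (hx : max X 1 ≤ x) :
      (countFn Λ ((1 + r) * x) : ℝ) ≤ countFn Λ x + c * r * x :=
    countFn_le_add_of_windowRatio_lt hr (by linarith [le_max_right X 1])
      (hX x (le_of_max_le_left hx))
  set a := ⌈max X 1⌉₊
  refine ⟨c * (1 + r) + (Nat.count (· ∈ greedySet Λ c) a + 2), ?_⟩
  filter_upwards [eventually_ge_atTop (a : ℝ)] with x hx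
  have hx0 : 0 ≤ x := le_trans (Nat.cast_nonneg a) hx
  have hbound := count_greedySet_le hc hr (by positivity) hwindow
    (n := ⌊x⌋₊ + 1) ((Nat.le_floor hx).trans (Nat.le_succ _))
  rw [countFn_eq_count _ hx0]
  push_cast at hbound
  nlinarith [Nat.floor_le hx0, mul_nonneg hc hr.le]

theorem sub_one_le_countFn_greedySet (hc0 : 0 ≤ c) (hc1 : c ≤ 1) {x : ℝ} (hx : 0 ≤ x) :
    c * x - 1 ≤ countFn (greedySet Λ c) x := by
  rw [countFn_eq_count _ hx]
  have := sub_one_le_count_greedySet (Λ := Λ) hc1 (⌊x⌋₊ + 1)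
  push_cast at this
  nlinarith [Nat.lt_floor_add_one x]

theorem hasDensity_greedySet (hc0 : 0 ≤ c) (hc1 : c ≤ 1)
    (h : ∃ᶠ r in 𝓝[>] 0, upperWindow Λ r < c) : HasDensity (greedySet Λ c) c := by
  refine tendsto_div_id_of_linear_bounds (fun a ha => ?_) (fun a ha => ?_)
  · filter_upwards [eventually_add_le_mul ha 1, eventually_ge_atTop 0] with x hx hx0
    linarith [sub_one_le_countFn_greedySet (Λ := Λ) hc0 hc1 hx0]
  · obtain ⟨r, hr, ⟨hr0, hra⟩⟩ := (h.and_eventually (Ioo_mem_nhdsGT (sub_pos.2 ha))).exists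
    obtain ⟨K, hK⟩ := exists_eventually_countFn_greedySet_le hc0 hr0 hr
    filter_upwards [hK, eventually_add_le_mul (show c * (1 + r) < a by nlinarith) K] with x hx hxa
    exact hx.trans hxa

end GreedyDensity

/-- The maximum density `D̄₂(Λ)` is the infimum of densities of
measurable supersets of `Λ`. -/
theorem maxDensity_eq_inf_superset_densities (Λ : Set ℕ) (L : ℝ)
    (hL : Tendsto (fun r => upperWindow Λ r) (nhdsWithin 0 (Set.Ioi 0)) (nhds L)) :
    IsGLB {d : ℝ | ∃ Λ' : Set ℕ, Λ ⊆ Λ' ∧ HasDensity Λ' d} L := by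
  refine ⟨?_, fun b hb => ?_⟩
  · rintro d ⟨Λ', hsub, hd⟩
    exact le_of_tendsto hL <| eventually_nhdsWithin_of_forall fun r hr =>
      upperWindow_le_of_subset hsub hr hd
  · have hL0 : 0 ≤ L := ge_of_tendsto hL <| eventually_nhdsWithin_of_forall fun r hr =>
      upperWindow_nonneg Λ hr
    have hb1 : b ≤ 1 := hb ⟨Set.univ, Set.subset_univ Λ, hasDensity_univ⟩
    by_contra! hLb
    have hsmall : ∃ᶠ r in 𝓝[>] 0, upperWindow Λ r < (L + b) / 2 :=
      (hL.eventually (gt_mem_nhds (by linarith))).frequently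
    have := hb ⟨_, subset_greedySet, hasDensity_greedySet (by linarith) (by linarith) hsmall⟩
    linarith
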